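/- arXiv:math/9808146 — 2 statements merged into one kernel-verified Lean document; each statement's English description precedes it below -/
import Mathlib

section
/- For all powers of two m and n with m ≥ 16, n ≥ 4, and m ≤ 4n, the subgroup N of G(m,n) generated by a^4 is a characteristic subgroup of G(m,n), and the quotient G(m,n)/N is abelian. -/
/-!
The relation gives `b⁻¹ a b = a⁻³`, so conjugation by `b⁻¹` maps `⟨a⁴⟩` into
itself; since `b` has finite order, conjugation by `b` is a power of conjugation
by `b⁻¹`, so `⟨a⁴⟩` is normal. Modulo `⟨a⁴⟩` the generators commute, hence
`⟨a⁴⟩` contains the derived subgroup; conversely `a⁴ = ⁅b⁻¹, a⁻¹⁆`. So `⟨a⁴⟩` is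
the derived subgroup, which is characteristic.
-/

/-- The relators of the presentation `⟨a, b | a^m, b^n, [b,a] = a^4⟩`, where `a` is
`FreeGroup.of true`, `b` is `FreeGroup.of false`, and `[b,a] = b⁻¹a⁻¹ba`. -/
def GRels (m n : ℕ) : Set (FreeGroup Bool) :=
  { FreeGroup.of true ^ m,
    FreeGroup.of false ^ n,
    (FreeGroup.of false)⁻¹ * (FreeGroup.of true)⁻¹ * FreeGroup.of false *
      FreeGroup.of true * (FreeGroup.of true ^ 4)⁻¹ }

/-- The group `G(m, n) = ⟨a, b | a^m, b^n, [b,a] = a^4⟩`. -/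
abbrev Gmn (m n : ℕ) : Type := PresentedGroup (GRels m n)

/-- The image of the generator `a` in `G(m, n)`. -/
def gen_a (m n : ℕ) : Gmn m n := PresentedGroup.of true

/-- The image of the generator `b` in `G(m, n)`. -/
def gen_b (m n : ℕ) : Gmn m n := PresentedGroup.of false

open scoped commutatorElement

namespace Subgroup

variable {G : Type*} [Group G]

theorem conj_mem_zpowers_of_conj_mem {s g : G} (h : g * s * g⁻¹ ∈ zpowers s) :
    ∀ x ∈ zpowers s, g * x * g⁻¹ ∈ zpowers s := by
  rintro _ ⟨k, rfl⟩
  rw [← conj_zpow]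
  exact zpow_mem h k

theorem mem_normalizer_of_isOfFinOrder {H : Subgroup G} {g : G} (hg : IsOfFinOrder g)
    (h : ∀ x ∈ H, g * x * g⁻¹ ∈ H) : g ∈ normalizer (H : Set G) := by
  have hpow : ∀ k : ℕ, ∀ x ∈ H, g ^ k * x * (g ^ k)⁻¹ ∈ H := by
    intro k
    induction k with
    | zero => simp
    | succ k ih =>
      intro x hx
      simpa only [pow_succ', mul_inv_rev, mul_assoc] using h _ (ih x hx)
  obtain ⟨k, hk⟩ := hg.mem_powers_iff_mem_zpowers.mpr (inv_mem (mem_zpowers g))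
  refine mem_normalizer_iff.mpr fun x => ⟨h x, fun hx => ?_⟩
  simpa [hk, mul_assoc] using hpow k _ hx

theorem isMulCommutative_of_closure_eq_top {S : Set G} (hS : closure S = ⊤)
    (hcomm : ∀ x ∈ S, ∀ y ∈ S, x * y = y * x) : IsMulCommutative G := by
  have := isMulCommutative_closure hcomm
  refine ⟨⟨fun x y => ?_⟩⟩
  simpa using congrArg Subtype.val
    (mul_comm' (⟨x, hS ▸ mem_top x⟩ : closure S) ⟨y, hS ▸ mem_top y⟩)

theorem commutator_le_of_closure_eq_top {S : Set G} (hS : closure S = ⊤) {N : Subgroup G}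
    [N.Normal] (hcomm : ∀ x ∈ S, ∀ y ∈ S, ⁅x, y⁆ ∈ N) : _root_.commutator G ≤ N := by
  rw [← Normal.quotient_commutative_iff_commutator_le]
  refine isMulCommutative_of_closure_eq_top (S := QuotientGroup.mk' N '' S) ?_ ?_
  · rw [← MonoidHom.map_closure (QuotientGroup.mk' N), hS, ← MonoidHom.range_eq_map,
      MonoidHom.range_eq_top]
    exact QuotientGroup.mk'_surjective N
  · rintro _ ⟨x, hx, rfl⟩ _ ⟨y, hy, rfl⟩
    rw [← commutatorElement_eq_one_iff_mul_comm, ← map_commutatorElement,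
      QuotientGroup.mk'_apply, QuotientGroup.eq_one_iff]
    exact hcomm x hx y hy

end Subgroup

theorem conj_zpow_eq_of_commutatorElement_inv_eq_zpow {G : Type*} [Group G] {a c : G} {k : ℤ}
    (h : ⁅c, a⁻¹⁆ = a ^ k) : c * a ^ k * c⁻¹ = (a ^ k) ^ (1 - k) := by
  have hconj : c * a⁻¹ * c⁻¹ = a ^ (k - 1) :=
    calc c * a⁻¹ * c⁻¹ = ⁅c, a⁻¹⁆ * a⁻¹ := by group
      _ = a ^ (k - 1) := by rw [h]; group
  calc c * a ^ k * c⁻¹ = (c * a⁻¹ * c⁻¹) ^ (-k) := by rw [conj_zpow]; group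
    _ = (a ^ k) ^ (1 - k) := by rw [hconj]; group

namespace Gmn

open Subgroup

variable {m n : ℕ}

theorem gen_b_pow_eq_one : gen_b m n ^ n = 1 :=
  (map_pow _ _ _).symm.trans
    (PresentedGroup.one_of_mem (Set.mem_insert_of_mem _ (Set.mem_insert _ _)))

theorem commutatorElement_gen_b_inv_gen_a_inv :
    ⁅(gen_b m n)⁻¹, (gen_a m n)⁻¹⁆ = gen_a m n ^ 4 := by
  have h := PresentedGroup.one_of_mem (rels := GRels m n)
    (Set.mem_insert_of_mem _ (Set.mem_insert_of_mem _ rfl))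
  simp only [map_mul, map_inv, map_pow] at h
  rw [commutatorElement_def, inv_inv, inv_inv]
  exact mul_inv_eq_one.mp h

theorem conj_gen_b_inv_mem_zpowers :
    (gen_b m n)⁻¹ * gen_a m n ^ 4 * (gen_b m n)⁻¹⁻¹ ∈ zpowers (gen_a m n ^ 4) := by
  have h := conj_zpow_eq_of_commutatorElement_inv_eq_zpow (a := gen_a m n)
    (c := (gen_b m n)⁻¹) (k := 4) (by rw [zpow_ofNat]; exact commutatorElement_gen_b_inv_gen_a_inv)
  rw [zpow_ofNat] at h
  exact ⟨1 - 4, h.symm⟩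

theorem gen_a_mem_centralizer :
    gen_a m n ∈ centralizer (zpowers (gen_a m n ^ 4) : Set (Gmn m n)) := by
  rintro _ ⟨k, rfl⟩
  exact ((Commute.self_pow (gen_a m n) 4).zpow_right k).eq.symm

theorem zpowers_gen_a_pow_four_normal (hn : 0 < n) : (zpowers (gen_a m n ^ 4)).Normal := by
  rw [← normalizer_eq_top_iff, eq_top_iff]
  intro x _
  refine PresentedGroup.generated_by _ _ (fun i => ?_) x
  cases i with
  | true => exact centralizer_le_normalizer _ gen_a_mem_centralizer
  | false =>
    show gen_b m n ∈ _
    have hfin : IsOfFinOrder (gen_b m n)⁻¹ :=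
      (isOfFinOrder_iff_pow_eq_one.mpr ⟨n, hn, gen_b_pow_eq_one⟩).inv
    simpa using inv_mem (mem_normalizer_of_isOfFinOrder hfin
      (conj_mem_zpowers_of_conj_mem conj_gen_b_inv_mem_zpowers))

theorem commutator_eq_zpowers (hn : 0 < n) :
    _root_.commutator (Gmn m n) = zpowers (gen_a m n ^ 4) := by
  have := zpowers_gen_a_pow_four_normal (m := m) hn
  have hba : ⁅gen_b m n, gen_a m n⁆ ∈ zpowers (gen_a m n ^ 4) := by
    have hconj : ⁅gen_b m n, gen_a m n⁆ = (gen_a m n * gen_b m n) *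
        ⁅(gen_b m n)⁻¹, (gen_a m n)⁻¹⁆ * (gen_a m n * gen_b m n)⁻¹ := by
      simp only [commutatorElement_def]; group
    rw [hconj, commutatorElement_gen_b_inv_gen_a_inv]
    exact Normal.conj_mem inferInstance _ (mem_zpowers _) _
  refine le_antisymm (commutator_le_of_closure_eq_top (PresentedGroup.closure_range_of _) ?_) ?_
  · rintro _ ⟨i, rfl⟩ _ ⟨j, rfl⟩
    cases i <;> cases j
    · simp
    · exact hba
    · rw [← commutatorElement_inv]; exact inv_mem hba
    · simp
  · rw [zpowers_le, ← commutatorElement_gen_b_inv_gen_a_inv]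
    exact commutator_mem_commutator (mem_top _) (mem_top _)

end Gmn

theorem Gmn_N_characteristic_quotient_abelian_general (m n : ℕ)
    (hn4 : 4 ≤ n) :
    (Subgroup.closure {gen_a m n ^ 4} : Subgroup (Gmn m n)).Characteristic ∧
    ∀ x y : Gmn m n, ⁅x, y⁆ ∈ (Subgroup.closure {gen_a m n ^ 4} : Subgroup (Gmn m n)) := by
  rw [← Subgroup.zpowers_eq_closure, ← Gmn.commutator_eq_zpowers (by omega)]
  exact ⟨inferInstance, fun x y => Subgroup.commutator_mem_commutator
    (Subgroup.mem_top x) (Subgroup.mem_top y)⟩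

/-- The subgroup `N = ⟨a^4⟩` of `G(m, n)` is characteristic, and the quotient
`G(m,n)/N` is abelian (i.e. every commutator lies in `N`). -/
theorem Gmn_N_characteristic_quotient_abelian (m n : ℕ)
    (hm : ∃ i, m = 2 ^ i) (hn : ∃ j, n = 2 ^ j)
    (hm16 : 16 ≤ m) (hn4 : 4 ≤ n) (hmn : m ≤ 4 * n) :
    (Subgroup.closure {gen_a m n ^ 4} : Subgroup (Gmn m n)).Characteristic ∧
    ∀ x y : Gmn m n, ⁅x, y⁆ ∈ (Subgroup.closure {gen_a m n ^ 4} : Subgroup (Gmn m n)) :=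
  Gmn_N_characteristic_quotient_abelian_general m n hn4
end

section
/- For all powers of two m and n with m ≥ 16, n ≥ 4, and m ≤ 4n, letting N be the subgroup of G = G(m,n) generated by a^4, there is no automorphism α of G that induces the inverting map g ↦ g⁻¹ on the quotient G/N; that is, there is no automorphism α of G such that α(g)·g ∈ N for every g ∈ G. -/
/-!
The relation `[b,a] = a^4` says `b⁻¹ a b = a⁻³`. An automorphism `α` inducing inversion modulo
`⟨a^4⟩` sends `a` to `a^s` with `s = 4k - 1` and `b` to `c b⁻¹` with `c ∈ ⟨a⟩`. Applying `α` to
`b⁻¹ a b = a⁻³` gives `b a^s b⁻¹ = a^(-3s)`, and conjugating back by `b` gives `a^s = a^(9s)`, so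
`a^(8s) = 1`. On the other hand `a` has order exactly `m`: `a ↦ (z ↦ z + 1)`, `b ↦ (z ↦ (-3)⁻¹ z)`
is a representation of `G(m,n)` by affine permutations of `ZMod m`, because for `m = 2^i` the
order of `-3` modulo `m` divides `2^(i-2)`, which divides `n` as `m ≤ 4n`. As `s` is odd, `m ∣ 8`, contradicting `m ≥ 16`.
-/

lemma two_pow_add_two_dvd_neg_three_pow_two_pow_sub_one (k : ℕ) :
    (2 : ℤ) ^ (k + 2) ∣ (-3) ^ 2 ^ k - 1 := by
  induction k with
  | zero => norm_num
  | succ k ih =>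
    obtain ⟨t, ht⟩ := ih
    have hsq : (-3 : ℤ) ^ 2 ^ (k + 1) - 1 = ((-3) ^ 2 ^ k - 1) * ((-3) ^ 2 ^ k + 1) := by
      rw [pow_succ, pow_mul]; ring
    have hplus : (-3 : ℤ) ^ 2 ^ k + 1 = 2 ^ (k + 2) * t + 2 := by linarith
    exact ⟨t * (2 ^ (k + 1) * t + 1), by rw [hsq, ht, hplus]; ring⟩

lemma neg_three_pow_two_pow_eq_one {i j : ℕ} (h : i ≤ j + 2) :
    (-3 : ZMod (2 ^ i)) ^ 2 ^ j = 1 := by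
  have hdvd : ((2 ^ i : ℕ) : ℤ) ∣ (-3) ^ 2 ^ j - 1 := by
    exact_mod_cast (pow_dvd_pow 2 h).trans (two_pow_add_two_dvd_neg_three_pow_two_pow_sub_one j)
  rw [← ZMod.intCast_zmod_eq_zero_iff_dvd] at hdvd
  push_cast at hdvd
  exact sub_eq_zero.mp hdvd

lemma orderOf_addRight {G : Type*} [AddGroup G] (a : G) :
    orderOf (Equiv.addRight a) = addOrderOf a := by
  rw [← orderOf_ofAdd_eq_addOrderOf, orderOf_eq_orderOf_iff]
  intro k
  simp [Equiv.ext_iff, ← ofAdd_nsmul]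

lemma zpow_sq_sub_one_mul_eq_one {G : Type*} [Group G] {a b : G} {r s : ℤ}
    (hab : b⁻¹ * a * b = a ^ r) (α : G ≃* G) (ha : α a = a ^ s)
    (hb : α b * b ∈ Subgroup.zpowers a) :
    a ^ ((r ^ 2 - 1) * s) = 1 := by
  have hconj (t : ℤ) : b⁻¹ * a ^ t * b = a ^ (r * t) := by
    rw [zpow_mul, ← hab]
    simpa using (conj_zpow (a := b⁻¹) (b := a) (i := t)).symm
  obtain ⟨l, hl⟩ := Subgroup.mem_zpowers_iff.mp hb
  have hαb : α b = a ^ l * b⁻¹ := eq_mul_inv_of_mul_eq hl.symm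
  have hαab : b * a ^ s * b⁻¹ = a ^ (r * s) := by
    have h := congrArg α hab
    rw [map_mul, map_mul, map_inv, map_zpow, ha, hαb, ← zpow_mul] at h
    rw [mul_comm r s, ← h]
    group
  have hfix : a ^ s = a ^ (r * (r * s)) := by
    rw [← hconj, ← hαab]; group
  calc a ^ ((r ^ 2 - 1) * s) = a ^ (r * (r * s)) * (a ^ s)⁻¹ := by
        rw [← zpow_neg, ← zpow_add]; ring_nf
    _ = 1 := by rw [← hfix, mul_inv_cancel]

namespace Gmn

variable {m n : ℕ}

lemma gen_a_pow : gen_a m n ^ m = 1 := by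
  simpa [gen_a, PresentedGroup.of] using
    PresentedGroup.one_of_mem (rels := GRels m n) (Set.mem_insert _ _)

lemma gen_b_inv_mul_gen_a_mul_gen_b :
    (gen_b m n)⁻¹ * gen_a m n * gen_b m n = gen_a m n ^ (-3 : ℤ) := by
  have h : (gen_b m n)⁻¹ * (gen_a m n)⁻¹ * gen_b m n * gen_a m n * (gen_a m n ^ 4)⁻¹ = 1 :=
    PresentedGroup.one_of_mem (Set.mem_insert_of_mem _ (Set.mem_insert_of_mem _ rfl))
  have h3 : (gen_b m n)⁻¹ * (gen_a m n)⁻¹ * gen_b m n = gen_a m n ^ 3 := by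
    rw [← one_mul (gen_a m n ^ 3), ← h]; group
  calc (gen_b m n)⁻¹ * gen_a m n * gen_b m n
      = ((gen_b m n)⁻¹ * (gen_a m n)⁻¹ * gen_b m n)⁻¹ := by group
    _ = gen_a m n ^ (-3 : ℤ) := by rw [h3]; group

def lift {H : Type*} [Group H] {A B : H} (hA : A ^ m = 1) (hB : B ^ n = 1)
    (hBA : B⁻¹ * A⁻¹ * B * A = A ^ 4) : Gmn m n →* H :=
  PresentedGroup.toGroup (f := fun c : Bool => if c then A else B) <| by
    rintro r (rfl | rfl | rfl) <;> simp [hA, hB, hBA]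

lemma lift_gen_a {H : Type*} [Group H] {A B : H} (hA : A ^ m = 1) (hB : B ^ n = 1)
    (hBA : B⁻¹ * A⁻¹ * B * A = A ^ 4) : lift hA hB hBA (gen_a m n) = A :=
  PresentedGroup.toGroup.of _

lemma orderOf_gen_a (hn : n ≠ 0) (h : (-3 : ZMod m) ^ n = 1) :
    orderOf (gen_a m n) = m := by
  set w := Units.ofPowEqOne _ n h hn
  have hA : Equiv.addRight (1 : ZMod m) ^ m = 1 := by
    rw [← orderOf_dvd_iff_pow_eq_one, orderOf_addRight, ZMod.addOrderOf_one]
  have hB : MulAction.toPermHom _ (ZMod m) w⁻¹ ^ n = 1 := by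
    rw [← map_pow, inv_pow, show w ^ n = 1 from Units.ext h, inv_one, map_one]
  have hBA : (MulAction.toPermHom _ (ZMod m) w⁻¹)⁻¹ * (Equiv.addRight (1 : ZMod m))⁻¹ *
      MulAction.toPermHom _ (ZMod m) w⁻¹ * Equiv.addRight 1 = Equiv.addRight 1 ^ 4 := by
    ext z
    have hw : (w : ZMod m) = -3 := rfl
    simp only [MulAction.toPermHom_apply, Equiv.neg_addRight, Equiv.Perm.coe_mul,
      Equiv.Perm.coe_inv, Equiv.coe_addRight, Function.comp_apply, MulAction.toPerm_apply, smul_add,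
      Units.smul_def, smul_eq_mul, mul_one, MulAction.toPerm_symm_apply, inv_inv,
      Units.mul_inv_cancel_left, Units.mul_inv, smul_neg, Equiv.nsmul_addRight, nsmul_eq_mul,
      Nat.cast_ofNat]
    rw [hw]
    ring
  refine Nat.dvd_antisymm (orderOf_dvd_of_pow_eq_one gen_a_pow) ?_
  have := orderOf_map_dvd (lift hA hB hBA) (gen_a m n)
  rwa [lift_gen_a, orderOf_addRight, ZMod.addOrderOf_one] at this

end Gmn

theorem Gmn_no_inverting_automorphism_general (m n : ℕ)
    (hm : ∃ i, m = 2 ^ i) (hn : ∃ j, n = 2 ^ j)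
    (hm16 : 16 ≤ m) (hmn : m ≤ 4 * n) :
    ¬ ∃ α : Gmn m n ≃* Gmn m n,
      ∀ g : Gmn m n, α g * g ∈ (Subgroup.closure {gen_a m n ^ 4} : Subgroup (Gmn m n)) := by
  rintro ⟨α, hα⟩
  obtain ⟨i, rfl⟩ := hm
  obtain ⟨j, rfl⟩ := hn
  have hi : 4 ≤ i := (Nat.pow_le_pow_iff_right (by norm_num : 1 < 2)).mp hm16
  have hij : i ≤ j + 2 :=
    (Nat.pow_le_pow_iff_right (by norm_num : 1 < 2)).mp (by rw [pow_add]; omega)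
  have hN : Subgroup.closure {gen_a (2 ^ i) (2 ^ j) ^ 4} ≤ Subgroup.zpowers (gen_a _ _) := by
    rw [← Subgroup.zpowers_eq_closure, Subgroup.zpowers_le]
    exact Subgroup.npow_mem_zpowers _ 4
  obtain ⟨k, hk⟩ := Subgroup.mem_closure_singleton.mp (hα (gen_a _ _))
  have hαa : α (gen_a _ _) = gen_a _ _ ^ (4 * k - 1) := by
    rw [eq_mul_inv_of_mul_eq hk.symm, ← zpow_natCast, ← zpow_mul, zpow_sub_one, Nat.cast_ofNat]
  have h8 := zpow_sq_sub_one_mul_eq_one Gmn.gen_b_inv_mul_gen_a_mul_gen_b α hαa (hN (hα _))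
  rw [← orderOf_dvd_iff_zpow_eq_one,
    Gmn.orderOf_gen_a (by positivity) (neg_three_pow_two_pow_eq_one hij)] at h8
  have h16 : (16 : ℤ) ∣ 2 ^ i := by simpa using pow_dvd_pow (2 : ℤ) hi
  norm_num at h8
  have h16_dvd : (16 : ℤ) ∣ 8 * (4 * k - 1) := h16.trans h8
  omega

/-- No automorphism of `G(m, n)` induces the inverting automorphism on the quotient
by `N = ⟨a^4⟩`: there is no automorphism `α` with `α g * g ∈ N` for all `g`. -/
theorem Gmn_no_inverting_automorphism (m n : ℕ)
    (hm : ∃ i, m = 2 ^ i) (hn : ∃ j, n = 2 ^ j)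
    (hm16 : 16 ≤ m) (hn4 : 4 ≤ n) (hmn : m ≤ 4 * n) :
    ¬ ∃ α : Gmn m n ≃* Gmn m n,
      ∀ g : Gmn m n, α g * g ∈ (Subgroup.closure {gen_a m n ^ 4} : Subgroup (Gmn m n)) :=
  Gmn_no_inverting_automorphism_general m n hm hn hm16 hmn
end
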